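/- A regular semigroup S is L-unipotent if and only if e*f*e = f*e for all idempotents e, f ∈ S. -/

import Mathlib

/-- The principal left ideal `Sa = {x*a : x ∈ S}` of an element of a semigroup. -/
def leftIdeal {S : Type*} [Semigroup S] (a : S) : Set S := {y | ∃ x : S, y = x * a}

/-- The principal right ideal `aS = {a*x : x ∈ S}` of an element of a semigroup. -/
def rightIdeal {S : Type*} [Semigroup S] (a : S) : Set S := {y | ∃ x : S, y = a * x}

/-- A semigroup is (von Neumann) regular if every element `a` has some `x` with `a*x*a = a`. -/
def IsRegularSemigroup (S : Type*) [Semigroup S] : Prop :=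
  ∀ a : S, ∃ x : S, a * x * a = a

/-- A regular semigroup is `L`-unipotent if any two `L`-related idempotents are equal. -/
def IsLUnipotent (S : Type*) [Semigroup S] : Prop :=
  IsRegularSemigroup S ∧
    ∀ e f : S, e * e = e → f * f = f → leftIdeal e = leftIdeal f → e = f

/-!
An idempotent `x` with `x * f = x` is `L`-related to the idempotent `f * x`, so in an
`L`-unipotent semigroup `f * x = x`. Applied to `x = f * e` this gives `e * f * e = f * e`,
once we know that `f * e` is idempotent. For that, take an inverse `z` of `f * e`: the
sandwich element `x = e * z * f` is idempotent with `x * f = x`, hence `f * x = x`, and then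
`f * e = f * x * e = x * e`, which is idempotent because `e * x = x`.
-/

section Semigroup

variable {S : Type*} [Semigroup S]

lemma leftIdeal_eq_of_mul_eq {p q : S} (hpq : p * q = p) (hqp : q * p = q) :
    leftIdeal p = leftIdeal q := by
  ext z
  constructor
  · rintro ⟨w, rfl⟩
    exact ⟨w * p, by rw [mul_assoc, hpq]⟩
  · rintro ⟨w, rfl⟩
    exact ⟨w * q, by rw [mul_assoc, hqp]⟩

lemma mul_eq_of_mem_leftIdeal {e f : S} (hf : IsIdempotentElem f) (h : e ∈ leftIdeal f) :
    e * f = e := by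
  obtain ⟨u, rfl⟩ := h
  rw [mul_assoc, hf.eq]

lemma self_mem_leftIdeal {e : S} (he : IsIdempotentElem e) : e ∈ leftIdeal e :=
  ⟨e, he.eq.symm⟩

lemma exists_inverse_of_mul_mul_eq {a y : S} (h : a * y * a = a) :
    ∃ z, a * z * a = a ∧ z * a * z = z := by
  have h' (t : S) : a * (y * (a * t)) = a * t := by rw [← mul_assoc, ← mul_assoc, h]
  exact ⟨y * a * y, by simp only [← mul_assoc, h], by simp only [mul_assoc, h']⟩

lemma exists_isIdempotentElem_sandwich {e f y : S} (he : IsIdempotentElem e)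
    (hf : IsIdempotentElem f) (hy : f * e * y * (f * e) = f * e) :
    ∃ x, IsIdempotentElem x ∧ e * x = x ∧ x * f = x ∧ f * x * e = f * e := by
  obtain ⟨z, hz, hzz⟩ := exists_inverse_of_mul_mul_eq hy
  refine ⟨e * z * f, ?_, ?_, ?_, ?_⟩
  · show e * z * f * (e * z * f) = e * z * f
    calc e * z * f * (e * z * f) = e * (z * (f * e) * z) * f := by simp only [mul_assoc]
      _ = e * z * f := by rw [hzz, mul_assoc e]
  · rw [← mul_assoc, ← mul_assoc, he.eq]
  · rw [mul_assoc, hf.eq]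
  · calc f * (e * z * f) * e = f * e * z * (f * e) := by simp only [mul_assoc]
      _ = f * e := hz

end Semigroup

namespace IsLUnipotent

variable {S : Type*} [Semigroup S] (hU : IsLUnipotent S)
include hU

lemma mul_eq_self_of_mul_eq_self {f x : S} (hx : IsIdempotentElem x) (hxf : x * f = x) :
    f * x = x := by
  have hfx : IsIdempotentElem (f * x) := by
    show f * x * (f * x) = f * x
    rw [mul_assoc, ← mul_assoc x, hxf, hx.eq]
  refine hU.2 _ _ hfx hx (leftIdeal_eq_of_mul_eq ?_ ?_)
  · rw [mul_assoc, hx.eq]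
  · rw [← mul_assoc, hxf, hx.eq]

lemma isIdempotentElem_mul {e f : S} (he : IsIdempotentElem e) (hf : IsIdempotentElem f) :
    IsIdempotentElem (f * e) := by
  obtain ⟨y, hy⟩ := hU.1 (f * e)
  obtain ⟨x, hx, hex, hxf, hfxe⟩ := exists_isIdempotentElem_sandwich he hf hy
  have hfx : f * x = x := hU.mul_eq_self_of_mul_eq_self hx hxf
  rw [hfx] at hfxe
  rw [← hfxe]
  show x * e * (x * e) = x * e
  rw [mul_assoc x, ← mul_assoc e, hex, ← mul_assoc, hx.eq]

lemma mul_mul_eq {e f : S} (he : IsIdempotentElem e) (hf : IsIdempotentElem f) :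
    e * f * e = f * e := by
  rw [mul_assoc]
  exact hU.mul_eq_self_of_mul_eq_self (hU.isIdempotentElem_mul he hf)
    (by rw [mul_assoc, he.eq])

end IsLUnipotent

/-- A regular semigroup is `L`-unipotent iff `e*f*e = f*e` for all idempotents `e, f`. -/
theorem stmt5 {S : Type*} [Semigroup S] (hS : IsRegularSemigroup S) :
    IsLUnipotent S ↔ ∀ e f : S, e * e = e → f * f = f → e * f * e = f * e := by
  constructor
  · exact fun hU e f he hf ↦ hU.mul_mul_eq he hf
  · refine fun h ↦ ⟨hS, fun e f he hf hL ↦ ?_⟩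
    have hef : e * f = e := mul_eq_of_mem_leftIdeal hf (hL ▸ self_mem_leftIdeal he)
    have hfe : f * e = f := mul_eq_of_mem_leftIdeal he (hL ▸ self_mem_leftIdeal hf)
    simpa only [hef, hfe, he] using h e f he hf
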